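/- arXiv:1907.04142 — 2 statements merged into one kernel-verified Lean document; each statement's English description precedes it below -/
import Mathlib

section
/- The first-order NAEV scheme is unconditionally energy stable: for every time step Δt > 0, the discrete modified energy E₁ₛₜⁿ = ½‖φⁿ‖_L² − |rⁿ|² satisfies E₁ₛₜⁿ⁺¹ − E₁ₛₜⁿ ≤ Δt (Gμⁿ⁺¹, μⁿ⁺¹) ≤ 0. -/
open scoped RealInnerProductSpace

theorem stmt_3 {H : Type*} [NormedAddCommGroup H] [InnerProductSpace ℝ H]
    (L G : H →ₗ[ℝ] H)
    (hsym : ∀ u v : H, ⟪L u, v⟫ = ⟪u, L v⟫)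
    (hLnn : ∀ u : H, 0 ≤ ⟪L u, u⟫)
    (hG : ∀ u : H, ⟪G u, u⟫ ≤ 0)
    (Δt : ℝ) (hΔt : 0 < Δt)
    (U : H → H) (E₁ : H → ℝ) (E₀ κ : ℝ)
    (φ0 φ1 μ1 φt : H) (r0 r1 : ℝ)
    (hpos : 0 < E₀ - E₁ φt + κ)
    (h1 : (Δt)⁻¹ • (φ1 - φ0) = G μ1)
    (h2 : μ1 = L φ1 +
      ((r1 + r0) / (2 * Real.sqrt (E₀ - E₁ φt + κ))) • U φt)
    (h3 : (r1 - r0) / Δt =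
      -(1 / (2 * Real.sqrt (E₀ - E₁ φt + κ))) * ⟪U φt, (Δt)⁻¹ • (φ1 - φ0)⟫) :
    ((1/2) * ⟪L φ1, φ1⟫ - r1 ^ 2) - ((1/2) * ⟪L φ0, φ0⟫ - r0 ^ 2)
      ≤ Δt * ⟪G μ1, μ1⟫ ∧ Δt * ⟪G μ1, μ1⟫ ≤ 0 := by
  have hΔne : Δt ≠ 0 := ne_of_gt hΔt
  set d : H := φ1 - φ0 with hd
  set c : ℝ := 1 / (2 * Real.sqrt (E₀ - E₁ φt + κ)) with hc
  -- e1 : ⟪d, μ1⟫ = Δt * ⟪G μ1, μ1⟫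
  have hdG : d = Δt • G μ1 := by
    rw [← h1, smul_smul, mul_inv_cancel₀ hΔne, one_smul]
  have e1 : ⟪d, μ1⟫ = Δt * ⟪G μ1, μ1⟫ := by
    rw [hdG, real_inner_smul_left, real_inner_comm]
  -- r1 - r0 = -c * ⟪U φt, d⟫
  have e3 : r1 - r0 = -c * ⟪U φt, d⟫ := by
    have := h3
    rw [real_inner_smul_right] at this
    field_simp at this
    rw [this]; ring
  -- e2 : ⟪d, μ1⟫ = ⟪d, L φ1⟫ - (r1^2 - r0^2)
  have e2 : ⟪d, μ1⟫ = ⟪d, L φ1⟫ - (r1 ^ 2 - r0 ^ 2) := by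
    have hrr : r1 ^ 2 - r0 ^ 2 = (r1 + r0) * (r1 - r0) := by ring
    rw [h2, inner_add_right, real_inner_smul_right, hrr, e3,
      real_inner_comm (U φt) d]
    ring
  -- symmetry cross terms
  have hcross : ⟪L φ1, φ0⟫ = ⟪L φ0, φ1⟫ := by
    rw [hsym, real_inner_comm]
  have e4 : ⟪L d, d⟫ = 2 * ⟪d, L φ1⟫ - ⟪L φ1, φ1⟫ + ⟪L φ0, φ0⟫ := by
    have h5 : ⟪d, L φ1⟫ = ⟪L φ1, φ1⟫ - ⟪L φ0, φ1⟫ := by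
      rw [hd, inner_sub_left, real_inner_comm φ1 (L φ1), ← hsym φ0 φ1]
    rw [hd, map_sub, inner_sub_left, inner_sub_right, inner_sub_right, hcross,
      h5]
    ring
  have hLd := hLnn d
  constructor
  · nlinarith [e1, e2, e4, hLd]
  · exact mul_nonpos_of_nonneg_of_nonpos (le_of_lt hΔt) (hG μ1)
end

section
/- The second-order Crank–Nicolson SAV scheme is unconditionally energy stable: [½(Lφⁿ⁺¹, φⁿ⁺¹) + |rⁿ⁺¹|²] − [½(Lφⁿ, φⁿ) + |rⁿ|²] ≤ Δt (Gμⁿ⁺¹ᐟ², μⁿ⁺¹ᐟ²) ≤ 0. -/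
open scoped RealInnerProductSpace

theorem stmt_9 {H : Type*} [NormedAddCommGroup H] [InnerProductSpace ℝ H]
    (L G : H →ₗ[ℝ] H)
    (hsym : ∀ u v : H, ⟪L u, v⟫ = ⟪u, L v⟫)
    (hLnn : ∀ u : H, 0 ≤ ⟪L u, u⟫)
    (hG : ∀ u : H, ⟪G u, u⟫ ≤ 0)
    (Δt : ℝ) (hΔt : 0 < Δt)
    (U : H → H) (E₁ : H → ℝ) (C : ℝ)
    (φ0 φ1 μh φt : H) (r0 r1 S : ℝ)
    (hS : S = Real.sqrt (E₁ φt + C)) (hSpos : 0 < S)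
    (h1 : (Δt)⁻¹ • (φ1 - φ0) = G μh)
    (h2 : μh = L ((2:ℝ)⁻¹ • (φ1 + φ0)) + ((r1 + r0) / (2 * S)) • U φt)
    (h3 : (r1 - r0) / Δt = (1 / (2 * S)) * ⟪U φt, (Δt)⁻¹ • (φ1 - φ0)⟫) :
    ((1/2) * ⟪L φ1, φ1⟫ + r1 ^ 2) - ((1/2) * ⟪L φ0, φ0⟫ + r0 ^ 2)
      ≤ Δt * ⟪G μh, μh⟫ ∧ Δt * ⟪G μh, μh⟫ ≤ 0 := by
  have hΔt' : Δt ≠ 0 := ne_of_gt hΔt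
  have hS' : S ≠ 0 := ne_of_gt hSpos
  have key : φ1 - φ0 = Δt • G μh := by
    rw [← h1, smul_smul, mul_inv_cancel₀ hΔt', one_smul]
  -- the U term
  have hU : ⟪U φt, φ1 - φ0⟫ = 2 * S * (r1 - r0) := by
    have := h3
    rw [real_inner_smul_right] at this
    field_simp at this
    nlinarith [this, hΔt, sq_nonneg (⟪U φt, φ1 - φ0⟫ - 2 * S * (r1 - r0))]
  -- the L term
  have hcross : ⟪L φ0, φ1⟫ = ⟪L φ1, φ0⟫ := by
    rw [hsym φ0 φ1, real_inner_comm]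
  have hA : ⟪μh, φ1 - φ0⟫ =
      ((1/2) * ⟪L φ1, φ1⟫ + r1 ^ 2) - ((1/2) * ⟪L φ0, φ0⟫ + r0 ^ 2) := by
    rw [h2, inner_add_left, real_inner_smul_left, hU, map_smul,
      real_inner_smul_left, map_add, inner_add_left, inner_sub_right,
      inner_sub_right, hcross]
    field_simp
    ring
  have hB : ⟪μh, φ1 - φ0⟫ = Δt * ⟪G μh, μh⟫ := by
    rw [key, real_inner_smul_right, real_inner_comm]
  constructor
  · rw [← hA, hB]
  · have := hG μh
    nlinarith
end
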